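/- For every integer k with 0 ≤ k ≤ ⌊D/2⌋ there exists a subspace L of ℂ^{𝔽₂^D} of dimension D − 2k + 1 that is invariant under both 𝐀 and 𝐀*, contains no nonzero proper subspace invariant under both 𝐀 and 𝐀*, and has a basis w_0, …, w_{D−2k} such that for all 0 ≤ i ≤ D−2k one has 𝐀·w_i = (D−i−2k+1)·w_{i−1} + (i+1)·w_{i+1} and 𝐀*·w_i = (D − 2(i+k))·w_i, with the conventions w_{−1} = 0 and w_{D−2k+1} = 0. -/

import Mathlib

open Matrix

/-- Vertex set of the hypercube `H(D,2)`: binary words of length `D`. -/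
abbrev Vtx (D : ℕ) := Fin D → ZMod 2

/-- Adjacency matrix of the hypercube `H(D,2)`. -/
noncomputable def adjCube (D : ℕ) : Matrix (Vtx D) (Vtx D) ℂ :=
  fun y z => if hammingNorm (y - z) = 1 then 1 else 0

/-- Dual adjacency matrix of the hypercube with respect to `x₀`. -/
noncomputable def dualCube (D : ℕ) (x₀ : Vtx D) : Matrix (Vtx D) (Vtx D) ℂ :=
  Matrix.diagonal fun y => (D : ℂ) - 2 * hammingNorm (x₀ - y)

/-- A submodule is invariant under (the action by `mulVec` of) a matrix. -/
def MatInvariant {n : Type*} [Fintype n] (M : Matrix n n ℂ) (W : Submodule ℂ (n → ℂ)) : Prop :=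
  ∀ v ∈ W, M.mulVec v ∈ W

/-!
Write `z = x₀ - y` and split the coordinates into the `k` pairs `(m, k + m)` and the `D - 2k`
free coordinates `j ≥ 2k`. Take `w i (y) = ∏ₘ (z_m - z_{k+m}) · [z has exactly i ones among
the free coordinates]`. It is supported on the vertices at distance `k + i` from `x₀`, so it is
an eigenvector of `𝐀*` for `D - 2(k + i)`. Under `𝐀`, the two flips inside a pair change its
factor `z_m - z_{k+m}` into opposite numbers and cancel, while flipping a free coordinate moves
to `w (i - 1)` and `w (i + 1)`, with coefficients `D - 2k - i + 1` and `i + 1`.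

For irreducibility: the `w i` are eigenvectors of `𝐀*` for distinct eigenvalues, so a nonzero
`𝐀*`-invariant subspace of their span contains one of them, and because the off-diagonal
coefficients of the tridiagonal action of `𝐀` do not vanish, it then contains all of them.
-/

open Finset Function

section Tridiagonal

variable {K V : Type*} [Field K] [AddCommGroup V] [Module K V]

theorem Submodule.mem_of_add_mem_of_apply_eq_smul {f : Module.End K V} {p : Submodule K V}
    (hp : ∀ x ∈ p, f x ∈ p) {x y : V} {a b : K} (hx : f x = a • x) (hy : f y = b • y)
    (hab : a ≠ b) (hxy : x + y ∈ p) : x ∈ p := by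
  have h : (a - b) • x ∈ p := by
    convert p.sub_mem (hp _ hxy) (p.smul_mem b hxy) using 1
    simp only [map_add, hx, hy, smul_add, sub_smul]
    abel
  simpa [smul_smul, inv_mul_cancel₀ (sub_ne_zero.2 hab)] using p.smul_mem (a - b)⁻¹ h

theorem Submodule.mem_of_sum_mem_of_apply_eq_smul {ι : Type*} [DecidableEq ι]
    {f : Module.End K V} {p : Submodule K V} (hp : ∀ x ∈ p, f x ∈ p) {μ : ι → K}
    (hμ : Injective μ) (s : Finset ι) {v : ι → V} (hv : ∀ i, f (v i) = μ i • v i)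
    (hs : ∑ i ∈ s, v i ∈ p) {i : ι} (hi : i ∈ s) : v i ∈ p := by
  induction s using Finset.induction_on generalizing v i with
  | empty => simp at hi
  | insert a s has ih =>
    rw [sum_insert has] at hs
    have hrest : ∀ j ∈ s, v j ∈ p := by
      intro j hj
      have hsub : ∑ j ∈ s, (μ j - μ a) • v j ∈ p := by
        convert p.sub_mem (hp _ hs) (p.smul_mem (μ a) hs) using 1
        simp only [map_add, map_sum, hv, smul_add, smul_sum, sub_smul, sum_sub_distrib]
        abel
      have hj' := ih (v := fun j => (μ j - μ a) • v j)
        (fun j => by rw [map_smul, hv, smul_comm]) hsub hj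
      have hne : μ j - μ a ≠ 0 := sub_ne_zero.2 (hμ.ne (ne_of_mem_of_not_mem hj has))
      simpa [smul_smul, inv_mul_cancel₀ hne] using p.smul_mem (μ j - μ a)⁻¹ hj'
    rcases mem_insert.1 hi with rfl | hi
    · simpa using p.sub_mem hs (p.sum_mem hrest)
    · exact hrest i hi

theorem Submodule.span_invariant_of_forall_mem {f : Module.End K V} {s : Set V}
    (h : ∀ x ∈ s, f x ∈ Submodule.span K s) :
    ∀ x ∈ Submodule.span K s, f x ∈ Submodule.span K s :=
  fun _ hx => (Submodule.span_le.2 h : Submodule.span K s ≤ (Submodule.span K s).comap f) hx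

variable {A B : Module.End K V} {n : ℕ} {w : ℕ → V} {θ b c : ℕ → K}

theorem span_image_Iic_invariant_of_tridiagonal
    (hA : ∀ i ≤ n, A (w i) = b i • (if i = 0 then 0 else w (i - 1)) + c i • w (i + 1))
    (hw : w (n + 1) = 0) :
    ∀ x ∈ Submodule.span K (w '' Set.Iic n), A x ∈ Submodule.span K (w '' Set.Iic n) := by
  have hmem : ∀ i ≤ n + 1, w i ∈ Submodule.span K (w '' Set.Iic n) := by
    intro i hi
    rcases (Nat.le_succ_iff.1 hi) with hi | rfl
    · exact Submodule.subset_span ⟨i, hi, rfl⟩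
    · simp [hw]
  refine Submodule.span_invariant_of_forall_mem ?_
  rintro _ ⟨i, hi, rfl⟩
  rw [hA i hi]
  refine Submodule.add_mem _ (Submodule.smul_mem _ _ ?_)
    (Submodule.smul_mem _ _ (hmem _ (by simpa using hi)))
  split_ifs
  · exact Submodule.zero_mem _
  · exact hmem _ (by have := Set.mem_Iic.1 hi; omega)

theorem span_image_invariant_of_eigenvectors (hB : ∀ i, B (w i) = θ i • w i) (s : Set ℕ) :
    ∀ x ∈ Submodule.span K (w '' s), B x ∈ Submodule.span K (w '' s) := by
  refine Submodule.span_invariant_of_forall_mem ?_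
  rintro _ ⟨i, hi, rfl⟩
  rw [hB i]
  exact Submodule.smul_mem _ _ (Submodule.subset_span ⟨i, hi, rfl⟩)

theorem eq_span_image_Iic_of_tridiagonal (hθ : Injective θ) (hB : ∀ i, B (w i) = θ i • w i)
    (hA : ∀ i ≤ n, A (w i) = b i • (if i = 0 then 0 else w (i - 1)) + c i • w (i + 1))
    (hb : ∀ i, 0 < i → i ≤ n → b i ≠ 0) (hc : ∀ i < n, c i ≠ 0) {U : Submodule K V}
    (hUA : ∀ x ∈ U, A x ∈ U) (hUB : ∀ x ∈ U, B x ∈ U)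
    (hUL : U ≤ Submodule.span K (w '' Set.Iic n)) (hU : U ≠ ⊥) :
    U = Submodule.span K (w '' Set.Iic n) := by
  classical
  have hstart : ∃ i ≤ n, w i ∈ U := by
    obtain ⟨x, hxU, hx0⟩ := U.ne_bot_iff.1 hU
    obtain ⟨l, hl, rfl⟩ := (Finsupp.mem_span_image_iff_linearCombination K).1 (hUL hxU)
    obtain ⟨i, hi⟩ : l.support.Nonempty :=
      Finsupp.support_nonempty_iff.2 (by rintro rfl; simp at hx0)
    have hsum : ∑ j ∈ l.support, l j • w j ∈ U := by
      simpa [Finsupp.linearCombination_apply, Finsupp.sum] using hxU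
    have hli : l i • w i ∈ U :=
      Submodule.mem_of_sum_mem_of_apply_eq_smul hUB hθ l.support (v := fun j => l j • w j)
        (fun j => by rw [map_smul, hB, smul_comm]) hsum hi
    refine ⟨i, hl hi, ?_⟩
    exact (U.smul_mem_iff (Finsupp.mem_support_iff.1 hi)).1 hli
  have hstep : ∀ j ≤ n, w j ∈ U →
      (0 < j → w (j - 1) ∈ U) ∧ (j < n → w (j + 1) ∈ U) := by
    intro j hj hwj
    have hsum := hUA _ hwj
    rw [hA j hj] at hsum
    have hlow :
        B (if j = 0 then 0 else w (j - 1)) = θ (j - 1) • (if j = 0 then 0 else w (j - 1)) := by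
      split_ifs <;> simp [hB]
    have hne : θ (j - 1) ≠ θ (j + 1) := hθ.ne (by omega)
    have h1 := Submodule.mem_of_add_mem_of_apply_eq_smul hUB
      (by rw [map_smul, hlow, smul_comm]) (by rw [map_smul, hB, smul_comm]) hne hsum
    have h2 := Submodule.mem_of_add_mem_of_apply_eq_smul hUB
      (by rw [map_smul, hB, smul_comm]) (by rw [map_smul, hlow, smul_comm]) hne.symm
      (add_comm (b j • _) (c j • w (j + 1)) ▸ hsum)
    refine ⟨fun hj0 => ?_, fun hjn => (U.smul_mem_iff (hc j hjn)).1 h2⟩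
    rw [if_neg hj0.ne'] at h1
    exact (U.smul_mem_iff (hb j hj0 hj)).1 h1
  obtain ⟨i₀, hi₀, hwi₀⟩ := hstart
  have hw0 : w 0 ∈ U := Nat.decreasingInduction (motive := fun m _ => w m ∈ U)
    (fun m hm ih => by simpa using (hstep (m + 1) (by omega) ih).1 m.succ_pos) hwi₀ i₀.zero_le
  have hall : ∀ j ≤ n, w j ∈ U := by
    intro j
    induction j with
    | zero => exact fun _ => hw0
    | succ j ih => exact fun hj => (hstep j (by omega) (ih (by omega))).2 (by omega)
  refine le_antisymm hUL (Submodule.span_le.2 ?_)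
  rintro _ ⟨j, hj, rfl⟩
  exact hall j hj

theorem finrank_span_image_Iic (h : LinearIndependent K fun i : Fin (n + 1) => w i) :
    Module.finrank K (Submodule.span K (w '' Set.Iic n)) = n + 1 := by
  rw [← Set.Iio_add_one_eq_Iic, ← Fin.range_val, ← Set.range_comp]
  exact (finrank_span_eq_card h).trans (Fintype.card_fin _)

end Tridiagonal

theorem ZMod.val_add_one_add_val_two (a : ZMod 2) : (a + 1).val + a.val = 1 := by
  fin_cases a <;> rfl

theorem ZMod.val_add_val_two_of_cast_sub_ne_zero {a b : ZMod 2} (h : (a.val : ℂ) - b.val ≠ 0) :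
    a.val + b.val = 1 := by
  fin_cases a <;> fin_cases b <;> first | rfl | simp at h

namespace Vtx

variable {D : ℕ}

theorem neg_eq_self (x : Vtx D) : -x = x :=
  funext fun i => ZMod.neg_eq_self_mod_two (x i)

theorem sub_eq_iff_add_eq {y z e : Vtx D} : y - z = e ↔ y + e = z := by
  rw [eq_comm (a := y + e), ← sub_eq_iff_eq_add', ← neg_sub, neg_eq_self]

theorem hammingNorm_eq_sum_val (z : Vtx D) : hammingNorm z = ∑ j, (z j).val := by
  rw [hammingNorm, card_filter]
  exact sum_congr rfl fun j _ => by generalize z j = a; fin_cases a <;> rfl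

theorem hammingNorm_eq_one_iff (d : Vtx D) : hammingNorm d = 1 ↔ ∃ j, d = Pi.single j 1 := by
  have hbit : ∀ a : ZMod 2, a ≠ 0 ↔ a = 1 := by decide
  have hbit' : ∀ a : ZMod 2, a ≠ 1 ↔ a = 0 := by decide
  simp only [hammingNorm, card_eq_one, Finset.ext_iff, mem_filter, mem_univ, true_and,
    mem_singleton, hbit, funext_iff, Pi.single_apply]
  refine exists_congr fun j => forall_congr' fun i => ?_
  by_cases h : i = j <;> simp [h, hbit']

end Vtx

theorem adjCube_mulVec_apply {D : ℕ} (v : Vtx D → ℂ) (y : Vtx D) :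
    (adjCube D *ᵥ v) y = ∑ j : Fin D, v (y + Pi.single j 1) := by
  have hnbr : univ.filter (fun z => hammingNorm (y - z) = 1) =
      univ.image (fun j : Fin D => y + Pi.single j 1) := by
    ext z
    simp only [mem_filter, mem_univ, true_and, mem_image, Vtx.hammingNorm_eq_one_iff,
      Vtx.sub_eq_iff_add_eq]
  have hinj : Injective (fun j : Fin D => y + Pi.single j (1 : ZMod 2)) := by
    intro a b h
    by_contra hab
    simpa [Pi.single_apply, hab] using congrFun (add_left_cancel h) a
  simp only [mulVec, dotProduct, adjCube, ite_mul, one_mul, zero_mul, ← sum_filter, hnbr,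
    sum_image hinj.injOn]

namespace Vtx

variable {D k : ℕ}

-- Coordinates indexed by `ℕ` and extended by `0` beyond `D`, so that the index arithmetic of the
-- pairs `(m, k + m)` stays in `ℕ`.
def coord (z : Vtx D) (j : ℕ) : ZMod 2 :=
  if h : j < D then z ⟨j, h⟩ else 0

def flip (j : ℕ) (z : Vtx D) : Vtx D :=
  if h : j < D then z + Pi.single ⟨j, h⟩ 1 else z

theorem coord_flip_self {j : ℕ} (hj : j < D) (z : Vtx D) :
    (z.flip j).coord j = z.coord j + 1 := by
  simp [coord, flip, hj]

theorem coord_flip_of_ne {j j' : ℕ} (h : j' ≠ j) (z : Vtx D) :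
    (z.flip j).coord j' = z.coord j' := by
  unfold coord flip
  split_ifs <;> simp [Fin.ext_iff, h]

theorem sum_add_single_eq_sum_flip (f : Vtx D → ℂ) (z : Vtx D) :
    ∑ j : Fin D, f (z + Pi.single j 1) = ∑ j ∈ range D, f (z.flip j) := by
  rw [← Fin.sum_univ_eq_sum_range]
  simp [flip]

theorem hammingNorm_eq_sum_coord (z : Vtx D) :
    hammingNorm z = ∑ j ∈ range D, (z.coord j).val := by
  rw [hammingNorm_eq_sum_val, ← Fin.sum_univ_eq_sum_range]
  simp [coord]

def pairSign (k : ℕ) (z : Vtx D) : ℂ :=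
  ∏ m ∈ range k, (((z.coord m).val : ℂ) - (z.coord (k + m)).val)

def freeWeight (k : ℕ) (z : Vtx D) : ℕ :=
  ∑ j ∈ Ico (2 * k) D, (z.coord j).val

theorem pairSign_flip_of_le {j : ℕ} (hj : 2 * k ≤ j) (z : Vtx D) :
    (z.flip j).pairSign k = z.pairSign k := by
  refine prod_congr rfl fun m hm => ?_
  rw [mem_range] at hm
  rw [coord_flip_of_ne (by omega), coord_flip_of_ne (by omega)]

theorem freeWeight_flip_of_lt {j : ℕ} (hj : j < 2 * k) (z : Vtx D) :
    (z.flip j).freeWeight k = z.freeWeight k := by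
  refine sum_congr rfl fun j' hj' => ?_
  rw [mem_Ico] at hj'
  rw [coord_flip_of_ne (by omega)]

theorem sum_pairSign_flip (h2k : 2 * k ≤ D) (z : Vtx D) :
    ∑ j ∈ range (2 * k), (z.flip j).pairSign k = 0 := by
  rw [two_mul, sum_range_add, ← sum_add_distrib]
  refine sum_eq_zero fun m hm => ?_
  have hmk := mem_range.1 hm
  have hrest : ∀ j, (j = m ∨ j = k + m) →
      ∏ m' ∈ (range k).erase m, (((z.flip j).coord m').val - ((z.flip j).coord (k + m')).val : ℂ) =
      ∏ m' ∈ (range k).erase m, (((z.coord m').val : ℂ) - (z.coord (k + m')).val) := by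
    intro j hj
    refine prod_congr rfl fun m' hm' => ?_
    have := mem_range.1 (mem_of_mem_erase hm')
    have := ne_of_mem_erase hm'
    rw [coord_flip_of_ne (by omega), coord_flip_of_ne (by omega)]
  have hflip (a : ZMod 2) : ((a + 1).val : ℂ) = 1 - a.val :=
    eq_sub_of_add_eq (by exact_mod_cast ZMod.val_add_one_add_val_two a)
  unfold pairSign
  rw [← mul_prod_erase _ _ hm, ← mul_prod_erase _ _ hm, hrest m (Or.inl rfl),
    hrest (k + m) (Or.inr rfl), ← add_mul, coord_flip_self (by omega),
    coord_flip_of_ne (by omega), coord_flip_of_ne (by omega), coord_flip_self (by omega), hflip,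
    hflip]
  ring

theorem freeWeight_flip_add {j : ℕ} (hj : j ∈ Ico (2 * k) D) (z : Vtx D) :
    (z.flip j).freeWeight k + (z.coord j).val = z.freeWeight k + (z.coord j + 1).val := by
  unfold freeWeight
  rw [← add_sum_erase _ _ hj, ← add_sum_erase _ _ hj, coord_flip_self (mem_Ico.1 hj).2,
    sum_congr rfl fun j' hj' => by rw [coord_flip_of_ne (ne_of_mem_erase hj')]]
  ring

theorem indicator_freeWeight_flip {j : ℕ} (hj : j ∈ Ico (2 * k) D) (z : Vtx D) (i : ℕ) :
    (if (z.flip j).freeWeight k = i then 1 else 0 : ℂ) =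
      (z.coord j).val * (if z.freeWeight k = i + 1 then 1 else 0) +
      (1 - (z.coord j).val) * (if z.freeWeight k + 1 = i then 1 else 0) := by
  have h := freeWeight_flip_add hj z
  have hval : ((0 : ZMod 2) + 1).val = 1 ∧ ((1 : ZMod 2) + 1).val = 0 := by decide
  obtain h0 | h1 : z.coord j = 0 ∨ z.coord j = 1 := by generalize z.coord j = a; decide +revert
  · simp only [h0, hval, ZMod.val_zero, add_zero] at h ⊢
    split_ifs <;> first | omega | simp
  · simp only [h1, hval, ZMod.val_one, add_zero] at h ⊢
    split_ifs <;> first | omega | simp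

theorem freeWeight_le (z : Vtx D) : z.freeWeight k ≤ D - 2 * k := by
  simpa [freeWeight] using sum_le_card_nsmul (Ico (2 * k) D) (fun j => (z.coord j).val) 1
    fun j _ => Nat.le_of_lt_succ (ZMod.val_lt _)

theorem sum_indicator_freeWeight_flip (z : Vtx D) (i : ℕ) :
    ∑ j ∈ Ico (2 * k) D, (if (z.flip j).freeWeight k = i then 1 else 0 : ℂ) =
      z.freeWeight k * (if z.freeWeight k = i + 1 then 1 else 0) +
      ((D - 2 * k : ℕ) - z.freeWeight k : ℂ) * (if z.freeWeight k + 1 = i then 1 else 0) := by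
  rw [sum_congr rfl fun j hj => indicator_freeWeight_flip hj z i, sum_add_distrib, ← sum_mul,
    ← sum_mul, sum_sub_distrib, sum_const, Nat.card_Ico, freeWeight]
  push_cast
  simp

def pairedVec (k i : ℕ) (z : Vtx D) : ℂ :=
  z.pairSign k * if z.freeWeight k = i then 1 else 0

theorem sum_pairedVec_flip (h2k : 2 * k ≤ D) (i : ℕ) (z : Vtx D) :
    ∑ j ∈ range D, pairedVec k i (z.flip j) =
      ((D : ℂ) - i - 2 * k + 1) * (z.pairSign k * if z.freeWeight k + 1 = i then 1 else 0) +
      ((i : ℂ) + 1) * pairedVec k (i + 1) z := by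
  have hpairs : ∑ j ∈ range (2 * k), pairedVec k i (z.flip j) = 0 := by
    rw [sum_congr rfl fun j hj => by rw [pairedVec, freeWeight_flip_of_lt (mem_range.1 hj)],
      ← sum_mul, sum_pairSign_flip h2k, zero_mul]
  have hfree : ∑ j ∈ Ico (2 * k) D, pairedVec k i (z.flip j) =
      z.pairSign k * ∑ j ∈ Ico (2 * k) D, (if (z.flip j).freeWeight k = i then 1 else 0 : ℂ) := by
    rw [mul_sum]
    exact sum_congr rfl fun j hj => by rw [pairedVec, pairSign_flip_of_le (mem_Ico.1 hj).1]
  rw [← sum_range_add_sum_Ico _ h2k, hpairs, hfree, sum_indicator_freeWeight_flip, zero_add,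
    pairedVec]
  have hle := z.freeWeight_le (k := k)
  split_ifs with h1 h2 h2
  · omega
  · rw [h1]; push_cast; ring
  · subst h2; push_cast [Nat.cast_sub h2k, Nat.cast_sub hle]; ring
  · ring

theorem pairSign_mul_indicator_succ (i : ℕ) (z : Vtx D) :
    (z.pairSign k * if z.freeWeight k + 1 = i then 1 else 0) =
      if i = 0 then 0 else pairedVec k (i - 1) z := by
  rcases i with _ | i <;> simp [pairedVec]

theorem pairedVec_eq_zero_of_lt {i : ℕ} (hi : D - 2 * k < i) : pairedVec k i (D := D) = 0 :=
  funext fun z => by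
    simp [pairedVec, show z.freeWeight k ≠ i by have := z.freeWeight_le (k := k); omega]

theorem hammingNorm_eq_of_pairSign_ne_zero (h2k : 2 * k ≤ D) {z : Vtx D}
    (h : z.pairSign k ≠ 0) : hammingNorm z = k + z.freeWeight k := by
  rw [hammingNorm_eq_sum_coord, ← sum_range_add_sum_Ico _ h2k, two_mul, sum_range_add,
    ← sum_add_distrib, freeWeight, two_mul]
  congr 1
  calc ∑ m ∈ range k, ((z.coord m).val + (z.coord (k + m)).val) = ∑ m ∈ range k, 1 :=
        sum_congr rfl fun m hm =>
          ZMod.val_add_val_two_of_cast_sub_ne_zero (prod_ne_zero_iff.1 h m hm)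
    _ = k := by simp

theorem hammingNorm_eq_of_pairedVec_ne_zero (h2k : 2 * k ≤ D) {i : ℕ} {z : Vtx D}
    (h : pairedVec k i z ≠ 0) : hammingNorm z = k + i := by
  rw [pairedVec] at h
  rw [hammingNorm_eq_of_pairSign_ne_zero h2k (left_ne_zero_of_mul h)]
  by_contra hne
  simp [show z.freeWeight k ≠ i by omega] at h

def pairedBase (k i : ℕ) : Vtx D :=
  fun j => if j.val < k ∨ 2 * k ≤ j.val ∧ j.val < 2 * k + i then 1 else 0

theorem coord_pairedBase {i : ℕ} (h : 2 * k + i ≤ D) (j : ℕ) :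
    (pairedBase k i : Vtx D).coord j = if j < k ∨ 2 * k ≤ j ∧ j < 2 * k + i then 1 else 0 := by
  unfold coord pairedBase
  split_ifs <;> first | rfl | omega

theorem pairedVec_pairedBase {i : ℕ} (h : 2 * k + i ≤ D) :
    pairedVec k i (pairedBase k i : Vtx D) = 1 := by
  have hsign : (pairedBase k i : Vtx D).pairSign k = 1 := by
    refine prod_eq_one fun m hm => ?_
    have := mem_range.1 hm
    rw [coord_pairedBase h, coord_pairedBase h, if_pos (by omega), if_neg (by omega),
      ZMod.val_one, ZMod.val_zero]
    norm_num
  have hweight : (pairedBase k i : Vtx D).freeWeight k = i := by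
    have hone : ∀ j ∈ Ico (2 * k) (2 * k + i), ((pairedBase k i : Vtx D).coord j).val = 1 :=
      fun j hj => by rw [coord_pairedBase h, if_pos (by simp at hj; omega), ZMod.val_one]
    have hzero : ∀ j ∈ Ico (2 * k + i) D, ((pairedBase k i : Vtx D).coord j).val = 0 :=
      fun j hj => by rw [coord_pairedBase h, if_neg (by simp at hj; omega), ZMod.val_zero]
    rw [freeWeight, ← sum_Ico_consecutive _ (by omega : 2 * k ≤ 2 * k + i) h,
      sum_congr rfl hone, sum_congr rfl hzero]
    simp
  simp [pairedVec, hsign, hweight]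

end Vtx

noncomputable def cubeModuleVec {D : ℕ} (x₀ : Vtx D) (k i : ℕ) : Vtx D → ℂ :=
  fun y => Vtx.pairedVec k i (x₀ - y)

section CubeModule

variable {D k : ℕ} (x₀ : Vtx D)

theorem adjCube_mulVec_cubeModuleVec (h2k : 2 * k ≤ D) (i : ℕ) :
    adjCube D *ᵥ cubeModuleVec x₀ k i =
      ((D : ℂ) - i - 2 * k + 1) • (if i = 0 then 0 else cubeModuleVec x₀ k (i - 1)) +
      ((i : ℂ) + 1) • cubeModuleVec x₀ k (i + 1) := by
  funext y
  have hshift (j : Fin D) : x₀ - (y + Pi.single j 1) = x₀ - y + Pi.single j 1 := by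
    rw [sub_add_eq_sub_sub, sub_eq_add_neg _ (Pi.single j 1), Vtx.neg_eq_self]
  simp only [adjCube_mulVec_apply, cubeModuleVec, hshift, Vtx.sum_add_single_eq_sum_flip,
    Vtx.sum_pairedVec_flip h2k, Vtx.pairSign_mul_indicator_succ]
  split_ifs <;> simp [cubeModuleVec]

theorem dualCube_mulVec_cubeModuleVec (h2k : 2 * k ≤ D) (i : ℕ) :
    dualCube D x₀ *ᵥ cubeModuleVec x₀ k i =
      ((D : ℂ) - 2 * ((i : ℂ) + k)) • cubeModuleVec x₀ k i := by
  funext y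
  simp only [dualCube, mulVec_diagonal, Pi.smul_apply, smul_eq_mul, cubeModuleVec]
  by_cases h : Vtx.pairedVec k i (x₀ - y) = 0
  · simp [h]
  · rw [Vtx.hammingNorm_eq_of_pairedVec_ne_zero h2k h]
    push_cast
    ring

theorem cubeModuleVec_eq_zero_of_lt {i : ℕ} (hi : D - 2 * k < i) : cubeModuleVec x₀ k i = 0 :=
  funext fun _ => congrFun (Vtx.pairedVec_eq_zero_of_lt hi) _

theorem cubeModuleVec_ne_zero {i : ℕ} (hi : 2 * k + i ≤ D) : cubeModuleVec x₀ k i ≠ 0 := by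
  intro h
  have := congrFun h (x₀ - Vtx.pairedBase k i)
  rw [cubeModuleVec, sub_sub_cancel, Vtx.pairedVec_pairedBase hi] at this
  simp at this

theorem injective_dualCube_eigenvalue (D k : ℕ) :
    Injective fun i : ℕ => (D : ℂ) - 2 * ((i : ℂ) + k) :=
  fun a b h => by simpa using h

theorem linearIndependent_cubeModuleVec (h2k : 2 * k ≤ D) :
    LinearIndependent ℂ (fun i : Fin (D - 2 * k + 1) => cubeModuleVec x₀ k i) :=
  Module.End.eigenvectors_linearIndependent' (dualCube D x₀).mulVecLin _
    ((injective_dualCube_eigenvalue D k).comp Fin.val_injective) _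
    fun i => ⟨Module.End.mem_eigenspace_iff.2 (dualCube_mulVec_cubeModuleVec x₀ h2k i),
      cubeModuleVec_ne_zero x₀ (by omega)⟩

end CubeModule

theorem natCast_sub_sub_two_mul_add_one_ne_zero {D i k : ℕ} (h : i + 2 * k ≤ D) :
    (D : ℂ) - i - 2 * k + 1 ≠ 0 := by
  have hcast : ((D - 2 * k - i + 1 : ℕ) : ℂ) = (D : ℂ) - i - 2 * k + 1 := by
    push_cast [Nat.cast_sub (by omega : 2 * k ≤ D), Nat.cast_sub (by omega : i ≤ D - 2 * k)]
    ring
  exact hcast ▸ Nat.cast_ne_zero.2 (Nat.succ_ne_zero _)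

theorem stmt17_general (D : ℕ) (x₀ : Vtx D) (k : ℕ) (hkD : k ≤ D / 2) :
    ∃ L : Submodule ℂ (Vtx D → ℂ),
      Module.finrank ℂ L = D - 2 * k + 1 ∧
      MatInvariant (adjCube D) L ∧
      MatInvariant (dualCube D x₀) L ∧
      (∀ U : Submodule ℂ (Vtx D → ℂ), U ≤ L →
        MatInvariant (adjCube D) U → MatInvariant (dualCube D x₀) U → U = ⊥ ∨ U = L) ∧
      ∃ w : ℕ → (Vtx D → ℂ),
        (∀ i ≤ D - 2 * k, w i ∈ L) ∧
        LinearIndependent ℂ (fun i : Fin (D - 2 * k + 1) => w i) ∧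
        Submodule.span ℂ (w '' Set.Iic (D - 2 * k)) = L ∧
        w (D - 2 * k + 1) = 0 ∧
        (∀ i ≤ D - 2 * k,
          (adjCube D).mulVec (w i) =
            ((D : ℂ) - i - 2 * k + 1) • (if i = 0 then 0 else w (i - 1)) +
            ((i : ℂ) + 1) • w (i + 1)) ∧
        (∀ i ≤ D - 2 * k,
          (dualCube D x₀).mulVec (w i) = ((D : ℂ) - 2 * ((i : ℂ) + k)) • w i) := by
  have h2k : 2 * k ≤ D := by omega
  set w := cubeModuleVec x₀ k
  have hA := adjCube_mulVec_cubeModuleVec x₀ h2k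
  have hB := dualCube_mulVec_cubeModuleVec x₀ h2k
  have hw : w (D - 2 * k + 1) = 0 := cubeModuleVec_eq_zero_of_lt x₀ (by omega)
  have hli := linearIndependent_cubeModuleVec x₀ h2k
  refine ⟨Submodule.span ℂ (w '' Set.Iic (D - 2 * k)), finrank_span_image_Iic hli,
    span_image_Iic_invariant_of_tridiagonal (A := (adjCube D).mulVecLin) (fun i _ => hA i) hw,
    span_image_invariant_of_eigenvectors (B := (dualCube D x₀).mulVecLin) hB _,
    fun U hUL hUA hUB => or_iff_not_imp_left.2 ?_,
    w, fun i hi => Submodule.subset_span ⟨i, hi, rfl⟩, hli, rfl, hw, fun i _ => hA i,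
    fun i _ => hB i⟩
  exact eq_span_image_Iic_of_tridiagonal (A := (adjCube D).mulVecLin)
    (B := (dualCube D x₀).mulVecLin) (injective_dualCube_eigenvalue D k) hB (fun i _ => hA i)
    (fun i _ hi => natCast_sub_sub_two_mul_add_one_ne_zero (by omega))
    (fun i _ => Nat.cast_add_one_ne_zero i) hUA hUB hUL

theorem stmt17 (D : ℕ) (hD : 3 ≤ D) (x₀ : Vtx D) (k : ℕ) (hkD : k ≤ D / 2) :
    ∃ L : Submodule ℂ (Vtx D → ℂ),
      Module.finrank ℂ L = D - 2 * k + 1 ∧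
      MatInvariant (adjCube D) L ∧
      MatInvariant (dualCube D x₀) L ∧
      (∀ U : Submodule ℂ (Vtx D → ℂ), U ≤ L →
        MatInvariant (adjCube D) U → MatInvariant (dualCube D x₀) U → U = ⊥ ∨ U = L) ∧
      ∃ w : ℕ → (Vtx D → ℂ),
        (∀ i ≤ D - 2 * k, w i ∈ L) ∧
        LinearIndependent ℂ (fun i : Fin (D - 2 * k + 1) => w i) ∧
        Submodule.span ℂ (w '' Set.Iic (D - 2 * k)) = L ∧
        w (D - 2 * k + 1) = 0 ∧
        (∀ i ≤ D - 2 * k,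
          (adjCube D).mulVec (w i) =
            ((D : ℂ) - i - 2 * k + 1) • (if i = 0 then 0 else w (i - 1)) +
            ((i : ℂ) + 1) • w (i + 1)) ∧
        (∀ i ≤ D - 2 * k,
          (dualCube D x₀).mulVec (w i) = ((D : ℂ) - 2 * ((i : ℂ) + k)) • w i) :=
  stmt17_general D x₀ k hkD
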